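/- (Lemma 2.3) Let f ∈ L²_t H¹_x(Q_1; ℝ³) with curl f(·,t) ∈ L²(B_1) for a.e. t, and suppose sup_{0<r<1} E(f;r) ≤ M for some M > 0, where E(f;r) = (1/r)∬_{Q_r}|∇f|². Then there exist absolute constants c > 0 and r₁ ∈ (0,1/2] such that H̃(f;r) ≤ c r H̃(f;1/2) + ĉ(M) for all 0 < r < r₁, where H̃(f;r) = (1/r³)∬_{Q_r}|f−[f]_{B_r}|² and ĉ(M) = c₂ M for an absolute constant c₂ (so ĉ(M) → 0 as M → 0). -/

import Mathlib

/-! On each time slice, the Poincaré inequality on balls of `ℝ³`,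
`∫_{B_r} |g - [g]_{B_r}|² ≤ 32 r² ∫_{B_r} |∇g|²`, integrated in time gives
`H̃(f;r) ≤ 32 E(f;r) ≤ 32 M`; so `c = 1`, `r₁ = 1/2`, `c₂ = 32` work.

For a convex set `s ⊆ ℝⁿ` of diameter at most `d`, Jensen's inequality bounds
`∫_s |g - [g]_s|²` by `|s|⁻¹ ∫_s ∫_s |g x - g y|²`, and the fundamental theorem of calculus
along the segment from `y` to `x` bounds `|g x - g y|²` by `d² ∫₀¹ |∇g(y + t (x - y))|² dt`.
For fixed `t`, one of the maps `x ↦ y + t (x - y)`, `y ↦ y + t (x - y)` is a homothety of ratio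
at least `1/2`, so the change of variables costs at most a factor `2ⁿ`:
`∫_s |g - [g]_s|² ≤ 2ⁿ d² ∫_s |∇g|²`. -/

open MeasureTheory Metric Set

noncomputable section

abbrev E3 := EuclideanSpace ℝ (Fin 3)

def curl3 (f : E3 → E3) (x : E3) : Fin 3 → ℝ :=
  ![fderiv ℝ (fun y => f y 2) x (EuclideanSpace.single 1 (1:ℝ))
      - fderiv ℝ (fun y => f y 1) x (EuclideanSpace.single 2 (1:ℝ)),
    fderiv ℝ (fun y => f y 0) x (EuclideanSpace.single 2 (1:ℝ))
      - fderiv ℝ (fun y => f y 2) x (EuclideanSpace.single 0 (1:ℝ)),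
    fderiv ℝ (fun y => f y 1) x (EuclideanSpace.single 0 (1:ℝ))
      - fderiv ℝ (fun y => f y 0) x (EuclideanSpace.single 1 (1:ℝ))]

/-- `H̃(f;r) = (1/r³)∬_{Q_r}|f−[f]_{B_r}|²`. -/
def Htilde (f : ℝ → E3 → E3) (r : ℝ) : ℝ :=
  (1/r^3) * ∫ t in Ioo (-(r^2)) (0:ℝ), ∫ x in ball (0:E3) r,
    ‖f t x - ⨍ y in ball (0:E3) r, f t y‖^2

/-- `E(f;r) = (1/r)∬_{Q_r}|∇f|²`. -/
def Escaled (f : ℝ → E3 → E3) (r : ℝ) : ℝ :=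
  (1/r) * ∫ t in Ioo (-(r^2)) (0:ℝ), ∫ x in ball (0:E3) r, ‖fderiv ℝ (f t) x‖^2

open Module
open scoped ENNReal

lemma convexOn_univ_norm_sq {F : Type*} [NormedAddCommGroup F] [NormedSpace ℝ F] :
    ConvexOn ℝ univ (fun v : F => ‖v‖ ^ 2) :=
  (convexOn_norm convex_univ).pow (fun _ _ => norm_nonneg _) 2

section Jensen

variable {α F : Type*} [MeasurableSpace α] {μ : Measure α} {s : Set α}
  [NormedAddCommGroup F] [NormedSpace ℝ F] [CompleteSpace F]

lemma ofReal_norm_setAverage_sq_le (h0 : μ s ≠ 0) (hs : μ s ≠ ∞) {f : α → F}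
    (hf : MemLp f 2 (μ.restrict s)) :
    ENNReal.ofReal (‖⨍ x in s, f x ∂μ‖ ^ 2) ≤ ⨍⁻ x in s, ENNReal.ofReal (‖f x‖ ^ 2) ∂μ := by
  have : IsFiniteMeasure (μ.restrict s) := isFiniteMeasure_restrict.2 hs
  have hf2 := hf.integrable_norm_pow two_ne_zero
  rw [setLAverage_eq, ← ofReal_setAverage hf2 (ae_of_all _ fun _ => by positivity)]
  exact ENNReal.ofReal_le_ofReal <| convexOn_univ_norm_sq.map_set_average_le
    (continuous_norm.pow 2).continuousOn isClosed_univ h0 hs (by simp)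
    (hf.integrable one_le_two) hf2

lemma ofReal_norm_sub_setAverage_sq_le (h0 : μ s ≠ 0) (hs : μ s ≠ ∞) {f : α → F}
    (hf : MemLp f 2 (μ.restrict s)) (a : F) :
    ENNReal.ofReal (‖a - ⨍ y in s, f y ∂μ‖ ^ 2) ≤ ⨍⁻ y in s, ENNReal.ofReal (‖a - f y‖ ^ 2) ∂μ := by
  have : IsFiniteMeasure (μ.restrict s) := isFiniteMeasure_restrict.2 hs
  have hsub : ⨍ y in s, (a - f y) ∂μ = a - ⨍ y in s, f y ∂μ := by
    rw [setAverage_eq, setAverage_eq, integral_sub (integrable_const a) (hf.integrable one_le_two),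
      setIntegral_const, smul_sub, smul_smul, inv_mul_cancel₀ ((measureReal_ne_zero_iff hs).2 h0),
      one_smul]
  rw [← hsub]
  exact ofReal_norm_setAverage_sq_le h0 hs ((memLp_const a).sub hf)

end Jensen

lemma sub_eq_setAverage_Icc_deriv {F : Type*} [NormedAddCommGroup F] [NormedSpace ℝ F]
    [CompleteSpace F] {φ : ℝ → F} (hφ : ∀ t ∈ Icc (0:ℝ) 1, DifferentiableAt ℝ φ t)
    (hint : IntegrableOn (deriv φ) (Icc (0:ℝ) 1)) :
    φ 1 - φ 0 = ⨍ t in Icc (0:ℝ) 1, deriv φ t := by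
  rw [setAverage_eq, Real.volume_real_Icc_of_le zero_le_one, sub_zero, inv_one, one_smul,
    integral_Icc_eq_integral_Ioc, ← intervalIntegral.integral_of_le zero_le_one,
    intervalIntegral.integral_deriv_eq_sub (by rwa [uIcc_of_le zero_le_one])
      ((intervalIntegrable_iff_integrableOn_Icc_of_le zero_le_one).2 hint)]

section Segment

variable {E F : Type*} [NormedAddCommGroup E] [NormedSpace ℝ E]
  [NormedAddCommGroup F] [NormedSpace ℝ F]

lemma hasDerivAt_comp_add_smul_sub {g : E → F} {x y : E} {t : ℝ}
    (hg : DifferentiableAt ℝ g (y + t • (x - y))) :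
    HasDerivAt (fun t : ℝ => g (y + t • (x - y))) (fderiv ℝ g (y + t • (x - y)) (x - y)) t :=
  hg.hasFDerivAt.comp_hasDerivAt t
    (by simpa using ((hasDerivAt_id t).smul_const (x - y)).const_add y)

variable [MeasurableSpace E] [BorelSpace E] [CompleteSpace F]

lemma ofReal_norm_sub_sq_le_mul_lintegral_fderiv {g : E → F} {x y : E}
    (hg : ∀ t ∈ Icc (0:ℝ) 1, DifferentiableAt ℝ g (y + t • (x - y))) :
    ENNReal.ofReal (‖g x - g y‖ ^ 2) ≤ ENNReal.ofReal (‖x - y‖ ^ 2) *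
      ∫⁻ t in Icc (0:ℝ) 1, ENNReal.ofReal (‖fderiv ℝ g (y + t • (x - y))‖ ^ 2) := by
  set I := ∫⁻ t in Icc (0:ℝ) 1, ENNReal.ofReal (‖fderiv ℝ g (y + t • (x - y))‖ ^ 2)
  rcases eq_or_ne I ∞ with hI | hI
  · rcases eq_or_ne x y with rfl | hxy
    · simp
    · rw [hI, ENNReal.mul_top (by simpa [sub_eq_zero] using hxy)]
      exact le_top
  set φ : ℝ → F := fun t => g (y + t • (x - y))
  set h : ℝ → ℝ := fun t => ‖fderiv ℝ g (y + t • (x - y))‖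
  have hh : MemLp h 2 (volume.restrict (Icc (0:ℝ) 1)) := by
    have hmeas : Measurable h := (measurable_fderiv ℝ g).norm.comp
      (by fun_prop : Continuous fun t : ℝ => y + t • (x - y)).measurable
    refine (memLp_two_iff_integrable_sq hmeas.aestronglyMeasurable).2
      ⟨(hmeas.pow_const 2).aestronglyMeasurable, ?_⟩
    rw [hasFiniteIntegral_iff_ofReal (ae_of_all _ fun _ => sq_nonneg _)]
    exact hI.lt_top
  have hderiv_le : ∀ t ∈ Icc (0:ℝ) 1, ‖deriv φ t‖ ≤ ‖x - y‖ * h t := fun t ht => by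
    rw [(hasDerivAt_comp_add_smul_sub (hg t ht)).deriv, mul_comm]
    exact ContinuousLinearMap.le_opNorm _ _
  have hderiv : MemLp (deriv φ) 2 (volume.restrict (Icc (0:ℝ) 1)) :=
    hh.of_le_mul (stronglyMeasurable_deriv φ).aestronglyMeasurable <|
      (ae_restrict_iff' measurableSet_Icc).2 <| ae_of_all _ fun t ht => by
        simpa [h] using hderiv_le t ht
  have hftc : g x - g y = ⨍ t in Icc (0:ℝ) 1, deriv φ t := by
    simpa [φ] using sub_eq_setAverage_Icc_deriv
      (fun t ht => (hasDerivAt_comp_add_smul_sub (hg t ht)).differentiableAt)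
      (hderiv.integrable one_le_two)
  calc ENNReal.ofReal (‖g x - g y‖ ^ 2)
      ≤ ⨍⁻ t in Icc (0:ℝ) 1, ENNReal.ofReal (‖deriv φ t‖ ^ 2) ∂volume := by
        rw [hftc]
        exact ofReal_norm_setAverage_sq_le (by simp) (by simp) hderiv
    _ ≤ ∫⁻ t in Icc (0:ℝ) 1, ENNReal.ofReal (‖x - y‖ ^ 2) * ENNReal.ofReal (h t ^ 2) := by
        rw [setLAverage_eq, Real.volume_Icc, sub_zero, ENNReal.ofReal_one, div_one]
        refine setLIntegral_mono' measurableSet_Icc fun t ht => ?_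
        rw [← ENNReal.ofReal_mul (sq_nonneg _), ← mul_pow]
        gcongr
        exact hderiv_le t ht
    _ = ENNReal.ofReal (‖x - y‖ ^ 2) * I := lintegral_const_mul' _ _ ENNReal.ofReal_ne_top

end Segment

section Haar

variable {E : Type*} [NormedAddCommGroup E] [NormedSpace ℝ E] [FiniteDimensional ℝ E]
  [MeasurableSpace E] [BorelSpace E] (μ : Measure E) [μ.IsAddHaarMeasure]
  {D : E → ℝ≥0∞}

lemma lintegral_comp_smul_add (hD : Measurable D) {a : ℝ} (ha : a ≠ 0) (c : E) :
    ∫⁻ v, D (a • v + c) ∂μ = ENNReal.ofReal |(a ^ finrank ℝ E)⁻¹| * ∫⁻ z, D z ∂μ := by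
  have hmap := lintegral_map (μ := μ) (hD.comp (measurable_add_const c))
    (measurable_const_smul a)
  simp only [Function.comp_def] at hmap
  rw [← hmap, Measure.map_addHaar_smul μ ha, lintegral_smul_measure,
    lintegral_add_right_eq_self (fun z => D z) c, smul_eq_mul]

lemma setLIntegral_comp_smul_add_le (hD : Measurable D) {a : ℝ} (ha : 1 / 2 ≤ a) (s : Set E)
    (c : E) : ∫⁻ v in s, D (a • v + c) ∂μ ≤ 2 ^ finrank ℝ E * ∫⁻ z, D z ∂μ := by
  have ha0 : 0 < a := by linarith
  calc ∫⁻ v in s, D (a • v + c) ∂μ ≤ ∫⁻ v, D (a • v + c) ∂μ := setLIntegral_le_lintegral _ _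
    _ = ENNReal.ofReal |(a ^ finrank ℝ E)⁻¹| * ∫⁻ z, D z ∂μ :=
        lintegral_comp_smul_add μ hD ha0.ne' c
    _ ≤ 2 ^ finrank ℝ E * ∫⁻ z, D z ∂μ := by
        gcongr
        rw [abs_of_pos (by positivity), ← inv_pow, ← ENNReal.ofReal_ofNat 2,
          ← ENNReal.ofReal_pow zero_le_two]
        gcongr
        rw [inv_le_comm₀ ha0 two_pos]
        linarith

lemma lintegral_lintegral_comp_segment_le (hD : Measurable D) (s : Set E) (t : ℝ) :
    ∫⁻ x in s, ∫⁻ y in s, D (y + t • (x - y)) ∂μ ∂μ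
      ≤ 2 ^ finrank ℝ E * (∫⁻ z, D z ∂μ) * μ s := by
  have hcomb : ∀ x y : E, y + t • (x - y) = (1 - t) • y + t • x := fun x y => by
    rw [smul_sub, sub_smul, one_smul]; abel
  simp_rw [hcomb]
  rcases le_or_gt t (1 / 2) with ht2 | ht2
  · calc ∫⁻ x in s, ∫⁻ y in s, D ((1 - t) • y + t • x) ∂μ ∂μ
        ≤ ∫⁻ _ in s, 2 ^ finrank ℝ E * ∫⁻ z, D z ∂μ ∂μ :=
          lintegral_mono fun x => setLIntegral_comp_smul_add_le μ hD (by linarith) s _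
      _ = _ := setLIntegral_const _ _
  · rw [lintegral_lintegral_swap (by fun_prop)]
    simp_rw [add_comm _ (t • _)]
    calc ∫⁻ y in s, ∫⁻ x in s, D (t • x + (1 - t) • y) ∂μ ∂μ
        ≤ ∫⁻ _ in s, 2 ^ finrank ℝ E * ∫⁻ z, D z ∂μ ∂μ :=
          lintegral_mono fun y => setLIntegral_comp_smul_add_le μ hD ht2.le s _
      _ = _ := setLIntegral_const _ _

lemma lintegral_lintegral_lintegral_comp_segment_le (hD : Measurable D) (s : Set E) :
    ∫⁻ x in s, ∫⁻ y in s, (∫⁻ t in Icc (0:ℝ) 1, D (y + t • (x - y))) ∂μ ∂μ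
      ≤ 2 ^ finrank ℝ E * (∫⁻ z, D z ∂μ) * μ s := by
  calc ∫⁻ x in s, ∫⁻ y in s, (∫⁻ t in Icc (0:ℝ) 1, D (y + t • (x - y))) ∂μ ∂μ
      = ∫⁻ t in Icc (0:ℝ) 1, ∫⁻ x in s, ∫⁻ y in s, D (y + t • (x - y)) ∂μ ∂μ := by
        simp_rw [fun x => lintegral_lintegral_swap (μ := μ.restrict s)
          (ν := volume.restrict (Icc (0:ℝ) 1)) (f := fun y t => D (y + t • (x - y)))
          (by fun_prop)]
        exact lintegral_lintegral_swap (by fun_prop)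
    _ ≤ ∫⁻ _ in Icc (0:ℝ) 1, 2 ^ finrank ℝ E * (∫⁻ z, D z ∂μ) * μ s :=
        lintegral_mono fun t => lintegral_lintegral_comp_segment_le μ hD s t
    _ = _ := by simp

end Haar

section Poincare

variable {E F : Type*} [NormedAddCommGroup E] [NormedSpace ℝ E]
  [MeasurableSpace E] [BorelSpace E] [NormedAddCommGroup F] [NormedSpace ℝ F] [CompleteSpace F]
  {s : Set E} {g : E → F}

lemma ofReal_norm_sub_sq_le_mul_lintegral_indicator (hs : Convex ℝ s)
    (hg : ∀ x ∈ s, DifferentiableAt ℝ g x) {x y : E} (hx : x ∈ s) (hy : y ∈ s) :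
    ENNReal.ofReal (‖g x - g y‖ ^ 2) ≤ ENNReal.ofReal (‖x - y‖ ^ 2) *
      ∫⁻ t in Icc (0:ℝ) 1,
        s.indicator (fun z => ENNReal.ofReal (‖fderiv ℝ g z‖ ^ 2)) (y + t • (x - y)) := by
  have hmem : ∀ t ∈ Icc (0:ℝ) 1, y + t • (x - y) ∈ s := fun t ht =>
    hs.add_smul_sub_mem hy hx ht
  refine (ofReal_norm_sub_sq_le_mul_lintegral_fderiv fun t ht => hg _ (hmem t ht)).trans_eq ?_
  congr 1
  exact setLIntegral_congr_fun measurableSet_Icc fun t ht =>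
    (indicator_of_mem (hmem t ht) fun z => ENNReal.ofReal (‖fderiv ℝ g z‖ ^ 2)).symm

variable [FiniteDimensional ℝ E] (μ : Measure E) [μ.IsAddHaarMeasure]

lemma lintegral_lintegral_ofReal_norm_sub_sq_le (hs : Convex ℝ s) (hsm : MeasurableSet s)
    {d : ℝ} (hd : ∀ x ∈ s, ∀ y ∈ s, ‖x - y‖ ≤ d) (hg : ∀ x ∈ s, DifferentiableAt ℝ g x) :
    ∫⁻ x in s, ∫⁻ y in s, ENNReal.ofReal (‖g x - g y‖ ^ 2) ∂μ ∂μ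
      ≤ 2 ^ finrank ℝ E * ENNReal.ofReal (d ^ 2) *
        (∫⁻ x in s, ENNReal.ofReal (‖fderiv ℝ g x‖ ^ 2) ∂μ) * μ s := by
  set D : E → ℝ≥0∞ := s.indicator fun z => ENNReal.ofReal (‖fderiv ℝ g z‖ ^ 2)
  have hD : Measurable D :=
    (((measurable_fderiv ℝ g).norm.pow_const 2).ennreal_ofReal).indicator hsm
  calc ∫⁻ x in s, ∫⁻ y in s, ENNReal.ofReal (‖g x - g y‖ ^ 2) ∂μ ∂μ
      ≤ ∫⁻ x in s, ∫⁻ y in s,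
          ENNReal.ofReal (d ^ 2) * (∫⁻ t in Icc (0:ℝ) 1, D (y + t • (x - y))) ∂μ ∂μ := by
        refine setLIntegral_mono' hsm fun x hx => setLIntegral_mono' hsm fun y hy => ?_
        refine (ofReal_norm_sub_sq_le_mul_lintegral_indicator hs hg hx hy).trans ?_
        gcongr
        exact hd x hx y hy
    _ = ENNReal.ofReal (d ^ 2) *
          ∫⁻ x in s, ∫⁻ y in s, (∫⁻ t in Icc (0:ℝ) 1, D (y + t • (x - y))) ∂μ ∂μ := by
        simp only [lintegral_const_mul' _ _ ENNReal.ofReal_ne_top]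
    _ ≤ ENNReal.ofReal (d ^ 2) * (2 ^ finrank ℝ E * (∫⁻ z, D z ∂μ) * μ s) := by
        gcongr
        exact lintegral_lintegral_lintegral_comp_segment_le μ hD s
    _ = _ := by
        rw [lintegral_indicator hsm]
        ring

theorem integral_norm_sub_setAverage_sq_le (hs : Convex ℝ s) (hsm : MeasurableSet s)
    {d : ℝ} (hd : ∀ x ∈ s, ∀ y ∈ s, ‖x - y‖ ≤ d)
    (hg : ∀ x ∈ s, DifferentiableAt ℝ g x) (hg2 : IntegrableOn (fun x => ‖g x‖ ^ 2) s μ)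
    (hdg : IntegrableOn (fun x => ‖fderiv ℝ g x‖ ^ 2) s μ) :
    ∫ x in s, ‖g x - ⨍ y in s, g y ∂μ‖ ^ 2 ∂μ
      ≤ 2 ^ finrank ℝ E * d ^ 2 * ∫ x in s, ‖fderiv ℝ g x‖ ^ 2 ∂μ := by
  rcases eq_or_ne (μ s) 0 with h0 | h0
  · simp [Measure.restrict_eq_zero.2 h0]
  have hfin : μ s ≠ ∞ := (Metric.isBounded_iff.2 ⟨d, fun x hx y hy => by
    rw [dist_eq_norm]; exact hd x hx y hy⟩).measure_lt_top.ne
  have : IsFiniteMeasure (μ.restrict s) := isFiniteMeasure_restrict.2 hfin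
  have hgL2 : MemLp g 2 (μ.restrict s) := (memLp_two_iff_integrable_sq_norm
    (ContinuousOn.aestronglyMeasurable (fun x hx => (hg x hx).continuousAt.continuousWithinAt)
      hsm)).2 hg2
  have hvar : IntegrableOn (fun x => ‖g x - ⨍ y in s, g y ∂μ‖ ^ 2) s μ :=
    (hgL2.sub (memLp_const _)).integrable_norm_pow two_ne_zero
  rw [← ENNReal.ofReal_le_ofReal_iff (by positivity),
    ofReal_integral_eq_lintegral_ofReal hvar (ae_of_all _ fun _ => sq_nonneg _),
    ENNReal.ofReal_mul (by positivity), ENNReal.ofReal_mul (by positivity),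
    ENNReal.ofReal_pow zero_le_two, ENNReal.ofReal_ofNat,
    ofReal_integral_eq_lintegral_ofReal hdg (ae_of_all _ fun _ => sq_nonneg _)]
  calc ∫⁻ x in s, ENNReal.ofReal (‖g x - ⨍ y in s, g y ∂μ‖ ^ 2) ∂μ
      ≤ ∫⁻ x in s, (μ s)⁻¹ * ∫⁻ y in s, ENNReal.ofReal (‖g x - g y‖ ^ 2) ∂μ ∂μ := by
        refine lintegral_mono fun x => ?_
        rw [← ENNReal.div_eq_inv_mul, ← setLAverage_eq]
        exact ofReal_norm_sub_setAverage_sq_le h0 hfin hgL2 (g x)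
    _ = (μ s)⁻¹ * ∫⁻ x in s, ∫⁻ y in s, ENNReal.ofReal (‖g x - g y‖ ^ 2) ∂μ ∂μ :=
        lintegral_const_mul' _ _ (ENNReal.inv_ne_top.2 h0)
    _ ≤ (μ s)⁻¹ * (2 ^ finrank ℝ E * ENNReal.ofReal (d ^ 2) *
          (∫⁻ x in s, ENNReal.ofReal (‖fderiv ℝ g x‖ ^ 2) ∂μ) * μ s) := by
        gcongr
        exact lintegral_lintegral_ofReal_norm_sub_sq_le μ hs hsm hd hg
    _ = _ := by
        rw [mul_comm, mul_assoc, ENNReal.mul_inv_cancel h0 hfin, mul_one]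

theorem integral_norm_sub_setAverage_sq_le_ball (c : E) (r : ℝ)
    (hg : ∀ x ∈ ball c r, DifferentiableAt ℝ g x)
    (hg2 : IntegrableOn (fun x => ‖g x‖ ^ 2) (ball c r) μ)
    (hdg : IntegrableOn (fun x => ‖fderiv ℝ g x‖ ^ 2) (ball c r) μ) :
    ∫ x in ball c r, ‖g x - ⨍ y in ball c r, g y ∂μ‖ ^ 2 ∂μ
      ≤ 2 ^ finrank ℝ E * (2 * r) ^ 2 * ∫ x in ball c r, ‖fderiv ℝ g x‖ ^ 2 ∂μ :=
  integral_norm_sub_setAverage_sq_le μ (convex_ball c r) measurableSet_ball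
    (fun x hx y hy => (norm_sub_le_norm_sub_add_norm_sub x c y).trans
      (by linarith [mem_ball_iff_norm.1 hx, mem_ball_iff_norm'.1 hy]))
    hg hg2 hdg

end Poincare

lemma Htilde_nonneg (f : ℝ → E3 → E3) {r : ℝ} (hr : 0 ≤ r) : 0 ≤ Htilde f r := by
  unfold Htilde
  positivity

lemma Htilde_le_mul_Escaled {f : ℝ → E3 → E3} {r : ℝ} (hr : 0 < r)
    (hf : ∀ t ∈ Ioo (-(r ^ 2)) 0, ∀ x ∈ ball (0:E3) r, DifferentiableAt ℝ (f t) x)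
    (hf2 : ∀ t ∈ Ioo (-(r ^ 2)) 0, IntegrableOn (fun x => ‖f t x‖ ^ 2) (ball (0:E3) r))
    (hdf : ∀ t ∈ Ioo (-(r ^ 2)) 0,
      IntegrableOn (fun x => ‖fderiv ℝ (f t) x‖ ^ 2) (ball (0:E3) r))
    (hdfT : IntegrableOn (fun t => ∫ x in ball (0:E3) r, ‖fderiv ℝ (f t) x‖ ^ 2)
      (Ioo (-(r ^ 2)) 0)) :
    Htilde f r ≤ 32 * Escaled f r := by
  have hpoincare : ∀ t ∈ Ioo (-(r ^ 2)) 0,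
      ∫ x in ball (0:E3) r, ‖f t x - ⨍ y in ball (0:E3) r, f t y‖ ^ 2
        ≤ 32 * r ^ 2 * ∫ x in ball (0:E3) r, ‖fderiv ℝ (f t) x‖ ^ 2 := fun t ht => by
    have := integral_norm_sub_setAverage_sq_le_ball volume 0 r (hf t ht) (hf2 t ht) (hdf t ht)
    rwa [finrank_euclideanSpace_fin, show (2:ℝ) ^ 3 * (2 * r) ^ 2 = 32 * r ^ 2 by ring] at this
  have htime : ∫ t in Ioo (-(r ^ 2)) 0,
        ∫ x in ball (0:E3) r, ‖f t x - ⨍ y in ball (0:E3) r, f t y‖ ^ 2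
      ≤ 32 * r ^ 2 * ∫ t in Ioo (-(r ^ 2)) 0, ∫ x in ball (0:E3) r, ‖fderiv ℝ (f t) x‖ ^ 2 := by
    rw [← integral_const_mul]
    exact integral_mono_of_nonneg (ae_of_all _ fun _ => by positivity) (hdfT.const_mul _)
      ((ae_restrict_iff' measurableSet_Ioo).2 (ae_of_all _ hpoincare))
  unfold Htilde Escaled
  calc 1 / r ^ 3 * ∫ t in Ioo (-(r ^ 2)) 0,
        ∫ x in ball (0:E3) r, ‖f t x - ⨍ y in ball (0:E3) r, f t y‖ ^ 2
      ≤ 1 / r ^ 3 * (32 * r ^ 2 *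
          ∫ t in Ioo (-(r ^ 2)) 0, ∫ x in ball (0:E3) r, ‖fderiv ℝ (f t) x‖ ^ 2) := by
        gcongr
    _ = 32 * (1 / r * ∫ t in Ioo (-(r ^ 2)) 0, ∫ x in ball (0:E3) r, ‖fderiv ℝ (f t) x‖ ^ 2) := by
        field_simp

/-- Lemma 2.3: if `sup_{0<r<1} E(f;r) ≤ M` then `H̃(f;r) ≤ c r H̃(f;1/2) + c₂ M` for all
`0 < r < r₁`, with absolute constants `c, r₁, c₂` (so `ĉ(M) = c₂ M → 0` as `M → 0`). -/
theorem stmt_11 :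
    ∃ c : ℝ, 0 < c ∧ ∃ r₁ ∈ Ioc (0:ℝ) (1/2), ∃ c₂ : ℝ, 0 < c₂ ∧
      ∀ (f : ℝ → E3 → E3) (M : ℝ), 0 < M →
      (∀ t ∈ Ioo (-1:ℝ) (0:ℝ), ∀ x ∈ ball (0:E3) 1, DifferentiableAt ℝ (f t) x) →
      (∀ t ∈ Ioo (-1:ℝ) (0:ℝ), IntegrableOn (f t) (ball (0:E3) 1)) →
      (∀ t ∈ Ioo (-1:ℝ) (0:ℝ), IntegrableOn (fun x => ‖f t x‖^2) (ball (0:E3) 1)) →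
      (∀ t ∈ Ioo (-1:ℝ) (0:ℝ),
        IntegrableOn (fun x => ‖fderiv ℝ (f t) x‖^2) (ball (0:E3) 1)) →
      (∀ t ∈ Ioo (-1:ℝ) (0:ℝ),
        IntegrableOn (fun x => ∑ i : Fin 3, (curl3 (f t) x i)^2) (ball (0:E3) 1)) →
      (∀ s ∈ Ioc (0:ℝ) (1/2), IntegrableOn
        (fun t => ∫ x in ball (0:E3) s, ‖f t x - ⨍ y in ball (0:E3) s, f t y‖^2)
        (Ioo (-(s^2)) (0:ℝ))) →
      (∀ s ∈ Ioo (0:ℝ) 1, IntegrableOn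
        (fun t => ∫ x in ball (0:E3) s, ‖fderiv ℝ (f t) x‖^2) (Ioo (-(s^2)) (0:ℝ))) →
      (∀ r ∈ Ioo (0:ℝ) 1, Escaled f r ≤ M) →
      ∀ r ∈ Ioo (0:ℝ) r₁, Htilde f r ≤ c * r * Htilde f (1/2) + c₂ * M := by
  refine ⟨1, one_pos, 1 / 2, ⟨by norm_num, le_rfl⟩, 32, by norm_num, ?_⟩
  intro f M _ hf _ hf2 hdf _ _ hdfT hM r ⟨hr0, hr⟩
  have hr1 : r < 1 := by linarith
  have hT : ∀ t ∈ Ioo (-(r ^ 2)) 0, t ∈ Ioo (-1:ℝ) 0 := fun t ht => ⟨by nlinarith [ht.1], ht.2⟩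
  have hB : ball (0:E3) r ⊆ ball 0 1 := ball_subset_ball hr1.le
  calc Htilde f r
      ≤ 32 * Escaled f r := Htilde_le_mul_Escaled hr0 (fun t ht x hx => hf t (hT t ht) x (hB hx))
        (fun t ht => (hf2 t (hT t ht)).mono_set hB) (fun t ht => (hdf t (hT t ht)).mono_set hB)
        (hdfT r ⟨hr0, hr1⟩)
    _ ≤ 32 * M := by gcongr; exact hM r ⟨hr0, hr1⟩
    _ ≤ 1 * r * Htilde f (1 / 2) + 32 * M :=
        le_add_of_nonneg_left (by have := Htilde_nonneg f (r := 1 / 2) (by norm_num); positivity)
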